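/- arXiv:1211.0579 — 3 statements merged into one kernel-verified Lean document; each statement's English description precedes it below -/
import Mathlib

section
/- For every pencil of alternating bilinear forms on a finite-dimensional complex vector space there exists a bi-Lagrangian subspace: the rank r of the pencil is even, and there exists a subspace U ⊆ V such that A(u,u′) = 0 and B(u,u′) = 0 for all u, u′ ∈ U and 2·dim U = 2·dim V − r. -/
/-!
Induction on `dim V`. Over `ℂ` some `v ≠ 0` has `A v` and `B v` proportional: take `v ∈ ker A`,
or else an eigenvector of `A⁻¹ B`. Then `W = ker (A v) ⊓ ker (B v)` has codimension `c ≤ 1` and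
contains `v`; let `D` be a complement of `ℂ v` in `W`. Whenever `ker ((A + λB) v) = W`, which
fails for at most one `λ`, the kernel of `(A + λB)|_D` is `D ⊓ (ker (A + λB) + ℂ v)`, so the
rank of `(A + λB)|_D` is `rank (A + λB) - 2c`. Ranks in a pencil are lower semicontinuous:
`rank (A + λ₀B) ≤ rank (A + λB)` for all but finitely many `λ`. Hence the restricted pencil has
rank `r - 2c`, and a bi-Lagrangian `U'` of `D` gives the bi-Lagrangian `U' ⊕ ℂ v` of `V`.
-/

/-- The rank of a bilinear form `C` on `V`: `dim V - dim (ker C)`. -/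
noncomputable def formRank {V : Type*} [AddCommGroup V] [Module ℂ V]
    (C : V →ₗ[ℂ] V →ₗ[ℂ] ℂ) : ℕ :=
  Module.finrank ℂ V - Module.finrank ℂ (LinearMap.ker C)

open Module LinearMap
open Filter (cofinite eventually_cofinite)

section Semicontinuity

variable {K V W : Type*} [Field K] [AddCommGroup V] [Module K V] [FiniteDimensional K V]
  [AddCommGroup W] [Module K W]

lemma Module.End.finite_setOf_not_injective_one_add_smul (T : End K V) :
    {t : K | ¬Function.Injective ⇑(1 + t • T)}.Finite := by
  refine ((T.finite_hasEigenvalue).image fun μ => -μ⁻¹).subset ?_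
  intro t ht
  obtain ⟨x, hx, hx0⟩ : ∃ x, (1 + t • T) x = 0 ∧ x ≠ 0 := by
    simpa [← LinearMap.ker_eq_bot, Submodule.ne_bot_iff, and_comm] using ht
  have ht0 : t ≠ 0 := by rintro rfl; simp_all
  refine ⟨-t⁻¹, T.hasEigenvalue_of_hasEigenvector (x := x) ⟨?_, hx0⟩, by simp⟩
  rw [End.mem_eigenspace_iff]
  have : x + t • T x = 0 := by simpa using hx
  rw [neg_smul, eq_neg_iff_add_eq_zero, ← smul_right_inj ht0, smul_add, smul_smul,
    mul_inv_cancel₀ ht0, one_smul, add_comm, this, smul_zero]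

lemma eventually_finrank_range_le (f g : V →ₗ[K] W) (t₀ : K) :
    ∀ᶠ t : K in cofinite, finrank K (range (f + t₀ • g)) ≤ finrank K (range (f + t • g)) := by
  set f₀ := f + t₀ • g
  obtain ⟨X, hX⟩ := Submodule.exists_isCompl (ker f₀)
  obtain ⟨L, hL⟩ := (f₀.domRestrict X).exists_leftInverse_of_injective
    (ker_eq_bot.mpr (injective_domRestrict_iff.mpr hX.symm.disjoint))
  have hrank : finrank K (range f₀) = finrank K X := by
    have := f₀.finrank_range_add_finrank_ker
    have := Submodule.finrank_add_eq_of_isCompl hX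
    omega
  have hshift : ∀ t : K,
      L ∘ₗ (f + t • g).domRestrict X = 1 + (t - t₀) • (L ∘ₗ g.domRestrict X) := by
    intro t
    have hsplit : f + t • g = f₀ + (t - t₀) • g := by simp only [f₀, sub_smul]; abel
    ext x
    have hx : L (f₀ x) = x := LinearMap.congr_fun hL x
    simp only [hsplit, comp_apply, domRestrict_apply, LinearMap.add_apply, LinearMap.smul_apply,
      map_add, map_smul, hx, Module.End.one_apply]
  rw [eventually_cofinite]
  refine ((End.finite_setOf_not_injective_one_add_smul (L ∘ₗ g.domRestrict X)).preimage
    (sub_left_injective (b := t₀)).injOn).subset fun t ht => not_not.mp fun hinj => ht ?_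
  rw [hrank, ← finrank_range_of_inj (f := (f + t • g).domRestrict X)]
  · exact Submodule.finrank_mono (range_domRestrict_le_range _ _)
  · exact Function.Injective.of_comp (f := L) (by rw [← coe_comp, hshift]; exact not_not.mp hinj)

end Semicontinuity

lemma isGreatest_range_of_eventually_add_eq {α : Type*} [Infinite α] {f g : α → ℕ} {c r : ℕ}
    (hf : ∀ a, ∀ᶠ b in cofinite, f a ≤ f b) (hg : ∀ a, ∀ᶠ b in cofinite, g a ≤ g b)
    (hfg : ∀ᶠ a in cofinite, g a + c = f a) (hr : IsGreatest (Set.range f) r) :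
    ∃ r', IsGreatest (Set.range g) r' ∧ r' + c = r := by
  obtain ⟨⟨a, rfl⟩, hmax⟩ := hr
  obtain ⟨b, hab, hb⟩ := ((hf a).and hfg).exists
  have hfb := hmax ⟨b, rfl⟩
  refine ⟨g b, ⟨⟨b, rfl⟩, ?_⟩, by omega⟩
  rintro _ ⟨a', rfl⟩
  obtain ⟨b', hab', hb'⟩ := ((hg a').and hfg).exists
  have := hmax ⟨b', rfl⟩
  omega

lemma Submodule.exists_disjoint_sup_eq {K V : Type*} [DivisionRing K] [AddCommGroup V]
    [Module K V] {p q : Submodule K V} (h : p ≤ q) : ∃ D, Disjoint D p ∧ D ⊔ p = q := by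
  obtain ⟨D, hD⟩ := p.exists_isCompl
  refine ⟨D ⊓ q, hD.disjoint.symm.mono_left inf_le_left, ?_⟩
  rw [inf_comm, inf_sup_assoc_of_le _ h, hD.symm.sup_eq_top, inf_top_eq]

section Pencil

variable {K V : Type*} [Field K] [AddCommGroup V] [Module K V]

lemma exists_ne_zero_eq_zero_or_eq_smul [IsAlgClosed K] [FiniteDimensional K V] [Nontrivial V]
    {W : Type*} [AddCommGroup W] [Module K W] [FiniteDimensional K W]
    (f g : V →ₗ[K] W) (h : finrank K V = finrank K W) :
    ∃ v ≠ 0, f v = 0 ∨ ∃ μ : K, g v = μ • f v := by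
  by_cases hf : ker f = ⊥
  · let e := f.linearEquivOfInjective (ker_eq_bot.mp hf) h
    obtain ⟨μ, hμ⟩ := Module.End.exists_eigenvalue (e.symm.toLinearMap ∘ₗ g)
    obtain ⟨v, hv⟩ := hμ.exists_hasEigenvector
    refine ⟨v, hv.2, Or.inr ⟨μ, e.symm.injective ?_⟩⟩
    rw [map_smul]
    exact hv.apply_eq_smul.trans (congrArg (μ • ·) (e.symm_apply_apply v).symm)
  · obtain ⟨v, hv, hv0⟩ := (Submodule.ne_bot_iff _).mp hf
    exact ⟨v, hv0, Or.inl hv⟩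

lemma finite_setOf_ker_add_smul_ne {φ ψ : Dual K V} (h : φ = 0 ∨ ∃ μ : K, ψ = μ • φ) :
    {l : K | ker (φ + l • ψ) ≠ ker φ ⊓ ker ψ}.Finite := by
  rcases h with rfl | ⟨μ, rfl⟩
  · refine (Set.finite_singleton 0).subset fun l hl => ?_
    by_contra hl0
    exact hl (by simp [ker_smul _ _ hl0])
  · refine (Set.finite_singleton (-μ⁻¹)).subset fun l hl => ?_
    have hcomb : φ + l • μ • φ = (1 + l * μ) • φ := by rw [smul_smul, add_smul, one_smul]
    have hlμ : 1 + l * μ = 0 := by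
      by_contra hlμ
      exact hl (by rw [hcomb, ker_smul _ _ hlμ, inf_eq_left.mpr (ker_le_ker_smul _ _)])
    have hμ : μ ≠ 0 := by rintro rfl; simp at hlμ
    rw [Set.mem_singleton_iff]
    field_simp
    linear_combination hlμ

end Pencil

section Restrict

variable {K V : Type*} [Field K] [AddCommGroup V] [Module K V]
  {C : V →ₗ[K] V →ₗ[K] K} {v : V} {D : Submodule K V}

lemma ker_domRestrict₁₂_eq_comap (hC : C.IsAlt) (hDv : D ⊔ K ∙ v = ker (C v)) :
    ker (C.domRestrict₁₂ D D) = (ker C ⊔ K ∙ v).comap D.subtype := by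
  ext d
  simp only [LinearMap.mem_ker, Submodule.mem_comap, Submodule.coe_subtype]
  constructor
  · intro hd
    have hle : ker (C v) ≤ ker (C d) := by
      rw [← hDv, sup_le_iff, Submodule.span_singleton_le_iff_mem, LinearMap.mem_ker,
        ← hC.eq_iff]
      refine ⟨fun d' hd' => LinearMap.congr_fun hd ⟨d', hd'⟩, ?_⟩
      exact LinearMap.mem_ker.mp (hDv ▸ Submodule.mem_sup_left d.2)
    obtain ⟨a, ha⟩ : ∃ a : K, C d = a • C v := by
      have := mem_span_of_iInf_ker_le_ker (L := fun _ : Unit => C v) (by simpa using hle)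
      simpa [Submodule.mem_span_singleton, eq_comm] using this
    have hker : (d : V) - a • v ∈ ker C := by simp [ha]
    simpa using
      Submodule.add_mem_sup hker (Submodule.smul_mem _ a (Submodule.mem_span_singleton_self v))
  · intro hd
    obtain ⟨k, hk, w, hw, hkw⟩ := Submodule.mem_sup.mp hd
    obtain ⟨a, rfl⟩ := Submodule.mem_span_singleton.mp hw
    ext d'
    have hvd' : C v d' = 0 := LinearMap.mem_ker.mp (hDv ▸ Submodule.mem_sup_left d'.2)
    simp [domRestrict₁₂_apply, ← hkw, LinearMap.mem_ker.mp hk, hvd']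

end Restrict

section Isotropic

variable {K V : Type*} [Field K] [AddCommGroup V] [Module K V] {C : V →ₗ[K] V →ₗ[K] K}

lemma isotropic_sup_span_singleton (hC : C.IsAlt) {U : Submodule K V} {v : V}
    (hU : ∀ u ∈ U, ∀ u' ∈ U, C u u' = 0) (hUv : U ≤ ker (C v)) :
    ∀ u ∈ U ⊔ K ∙ v, ∀ u' ∈ U ⊔ K ∙ v, C u u' = 0 := by
  intro u hu u' hu'
  obtain ⟨x, hx, _, hy, rfl⟩ := Submodule.mem_sup.mp hu
  obtain ⟨a, rfl⟩ := Submodule.mem_span_singleton.mp hy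
  obtain ⟨x', hx', _, hy', rfl⟩ := Submodule.mem_sup.mp hu'
  obtain ⟨b, rfl⟩ := Submodule.mem_span_singleton.mp hy'
  have hvx' : C v x' = 0 := hUv hx'
  have hxv : C x v = 0 := hC.eq_iff.mp (hUv hx)
  simp [hU x hx x' hx', hvx', hxv, hC v]

end Isotropic

section FormRank

variable {V : Type*} [AddCommGroup V] [Module ℂ V] [FiniteDimensional ℂ V]

lemma formRank_add_finrank_ker (C : V →ₗ[ℂ] V →ₗ[ℂ] ℂ) :
    formRank C + finrank ℂ (ker C) = finrank ℂ V :=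
  Nat.sub_add_cancel (Submodule.finrank_le _)

lemma formRank_eq_finrank_range (C : V →ₗ[ℂ] V →ₗ[ℂ] ℂ) :
    formRank C = finrank ℂ (range C) := by
  have := C.finrank_range_add_finrank_ker
  have := formRank_add_finrank_ker C
  omega

lemma eventually_formRank_le (A B : V →ₗ[ℂ] V →ₗ[ℂ] ℂ) (l₀ : ℂ) :
    ∀ᶠ l : ℂ in cofinite, formRank (A + l₀ • B) ≤ formRank (A + l • B) := by
  simpa only [formRank_eq_finrank_range] using eventually_finrank_range_le A B l₀

lemma formRank_domRestrict₁₂_add {C : V →ₗ[ℂ] V →ₗ[ℂ] ℂ} {v : V} {D : Submodule ℂ V}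
    (hC : C.IsAlt) (hD : Disjoint D (ℂ ∙ v)) (hDv : D ⊔ ℂ ∙ v = ker (C v)) :
    formRank (C.domRestrict₁₂ D D) + 2 * (finrank ℂ V - finrank ℂ (ker (C v))) =
      formRank C := by
  have hv : ℂ ∙ v ≤ ker (C v) := hDv ▸ le_sup_right
  have hsplit : ∀ P : Submodule ℂ V, ℂ ∙ v ≤ P → P ≤ ker (C v) →
      finrank ℂ (P ⊓ D : Submodule ℂ V) + finrank ℂ (ℂ ∙ v) = finrank ℂ P := by
    intro P hvP hP
    have hsup : P ⊓ D ⊔ ℂ ∙ v = P := by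
      rw [inf_sup_assoc_of_le _ hvP, hDv, inf_eq_left.mpr hP]
    have hinf : P ⊓ D ⊓ ℂ ∙ v = ⊥ := hD.mono_left inf_le_right |>.eq_bot
    have := Submodule.finrank_sup_add_finrank_inf_eq (P ⊓ D) (ℂ ∙ v)
    rw [hsup, hinf, finrank_bot] at this
    omega
  set M := ker C ⊔ ℂ ∙ v
  have hM : M ≤ ker (C v) := sup_le (fun k hk => hC.eq_iff.mp (LinearMap.congr_fun hk v)) hv
  have hkerD :
      finrank ℂ (ker (C.domRestrict₁₂ D D)) = finrank ℂ (M ⊓ D : Submodule ℂ V) := by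
    rw [ker_domRestrict₁₂_eq_comap hC hDv, ← Submodule.finrank_map_subtype_eq,
      Submodule.map_comap_subtype, inf_comm]
  have hM' := hsplit M le_sup_right hM
  have hD' := hsplit _ hv le_rfl
  rw [inf_eq_right.mpr (hDv ▸ le_sup_left)] at hD'
  have hcodim : finrank ℂ (ker (C v)) + finrank ℂ M = finrank ℂ V + finrank ℂ (ker C) := by
    by_cases hCv : C v = 0
    · have hvker : ℂ ∙ v ≤ ker C := (Submodule.span_singleton_le_iff_mem _ _).mpr hCv
      rw [hCv, ker_zero, finrank_top, show M = ker C from sup_eq_left.mpr hvker]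
    · have hvker : v ∉ ker C := hCv
      rw [Submodule.finrank_sup_span_singleton hvker, ← Dual.finrank_ker_add_one_of_ne_zero hCv]
      ring
  have := formRank_add_finrank_ker C
  have := formRank_add_finrank_ker (C.domRestrict₁₂ D D)
  have := Submodule.finrank_le (ker (C v))
  omega

end FormRank

section Step

variable {V : Type*} [AddCommGroup V] [Module ℂ V] [FiniteDimensional ℂ V]
  {A B : V →ₗ[ℂ] V →ₗ[ℂ] ℂ} {v : V} {D : Submodule ℂ V} {r : ℕ}

lemma exists_isGreatest_formRank_domRestrict₁₂ (hA : A.IsAlt) (hB : B.IsAlt)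
    (hv : A v = 0 ∨ ∃ μ : ℂ, B v = μ • A v) (hD : Disjoint D (ℂ ∙ v))
    (hDW : D ⊔ ℂ ∙ v = ker (A v) ⊓ ker (B v))
    (hr : IsGreatest (Set.range fun l : ℂ => formRank (A + l • B)) r) :
    ∃ r', IsGreatest (Set.range fun l : ℂ =>
        formRank (A.domRestrict₁₂ D D + l • B.domRestrict₁₂ D D)) r' ∧
      r' + 2 * (finrank ℂ V - finrank ℂ (ker (A v) ⊓ ker (B v) : Submodule ℂ V)) = r := by
  refine isGreatest_range_of_eventually_add_eq
    (eventually_formRank_le A B) (eventually_formRank_le _ _) ?_ hr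
  refine eventually_cofinite.mpr
    ((finite_setOf_ker_add_smul_ne hv).subset fun l hl => not_not.mp fun hker => hl ?_)
  have hker : ker ((A + l • B) v) = ker (A v) ⊓ ker (B v) := by simpa using hker
  have hAlt : (A + l • B).IsAlt := fun x => by simp [hA x, hB x]
  have hrestrict : (A + l • B).domRestrict₁₂ D D =
      A.domRestrict₁₂ D D + l • B.domRestrict₁₂ D D := rfl
  rw [← hker, ← hrestrict]
  exact formRank_domRestrict₁₂_add hAlt hD (hDW.trans hker.symm)

theorem exists_isotropic_of_isGreatest_formRank (hA : A.IsAlt) (hB : B.IsAlt)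
    (hr : IsGreatest (Set.range fun l : ℂ => formRank (A + l • B)) r) :
    ∃ U : Submodule ℂ V, (∀ u ∈ U, ∀ u' ∈ U, A u u' = 0 ∧ B u u' = 0) ∧
      2 * finrank ℂ U + r = 2 * finrank ℂ V := by
  induction hn : finrank ℂ V using Nat.strong_induction_on generalizing V r with
  | _ n ih =>
    rcases subsingleton_or_nontrivial V with hV | hV
    · obtain ⟨⟨l, rfl⟩, -⟩ := hr
      refine ⟨⊥, by simp, ?_⟩
      have := formRank_add_finrank_ker (A + l • B)
      simp only [finrank_zero_of_subsingleton] at this hn ⊢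
      omega
    obtain ⟨v, hv0, hv⟩ := exists_ne_zero_eq_zero_or_eq_smul A B Subspace.dual_finrank_eq.symm
    set W := ker (A v) ⊓ ker (B v)
    obtain ⟨D, hD, hDW⟩ : ∃ D, Disjoint D (ℂ ∙ v) ∧ D ⊔ ℂ ∙ v = W :=
      Submodule.exists_disjoint_sup_eq <|
        (Submodule.span_singleton_le_iff_mem _ _).mpr ⟨hA v, hB v⟩
    obtain ⟨r', hr', hrr'⟩ : ∃ r', _ ∧ r' + 2 * (finrank ℂ V - finrank ℂ W) = r :=
      exists_isGreatest_formRank_domRestrict₁₂ hA hB hv hD hDW hr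
    have hDdim : finrank ℂ D + 1 = finrank ℂ W := by
      rw [← hDW, ← finrank_span_singleton (K := ℂ) hv0,
        ← Submodule.finrank_sup_add_finrank_inf_eq, hD.eq_bot, finrank_bot, add_zero]
    have hWdim := Submodule.finrank_le W
    have hAD : (A.domRestrict₁₂ D D).IsAlt := fun x => hA x
    have hBD : (B.domRestrict₁₂ D D).IsAlt := fun x => hB x
    obtain ⟨U, hUiso, hUdim⟩ := ih (finrank ℂ D) (by omega) hAD hBD hr' rfl
    have hUW : U.map D.subtype ≤ W := (Submodule.map_subtype_le D U).trans (hDW ▸ le_sup_left)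
    refine ⟨U.map D.subtype ⊔ ℂ ∙ v, fun u hu u' hu' => ⟨?_, ?_⟩, ?_⟩
    · refine isotropic_sup_span_singleton hA ?_ (hUW.trans inf_le_left) u hu u' hu'
      rintro _ ⟨x, hx, rfl⟩ _ ⟨x', hx', rfl⟩
      exact (hUiso x hx x' hx').1
    · refine isotropic_sup_span_singleton hB ?_ (hUW.trans inf_le_right) u hu u' hu'
      rintro _ ⟨x, hx, rfl⟩ _ ⟨x', hx', rfl⟩
      exact (hUiso x hx x' hx').2
    · have hvU : v ∉ U.map D.subtype := fun h =>
        hv0 ((Submodule.disjoint_def.mp hD) v (Submodule.map_subtype_le D U h)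
          (Submodule.mem_span_singleton_self v))
      rw [Submodule.finrank_sup_span_singleton hvU, Submodule.finrank_map_subtype_eq]
      omega

end Step

/-- For every pencil of alternating bilinear forms on a finite-dimensional complex vector
space, the rank `r` of the pencil (the maximum over `λ ∈ ℂ` of `rank (A + λB)`) is even,
and there exists a bi-Lagrangian subspace: a subspace `U` isotropic for both `A` and `B`
with `2 · dim U = 2 · dim V − r`. -/
theorem exists_biLagrangian
    (V : Type*) [AddCommGroup V] [Module ℂ V] [FiniteDimensional ℂ V]
    (A B : V →ₗ[ℂ] V →ₗ[ℂ] ℂ)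
    (hA : ∀ v : V, A v v = 0) (hB : ∀ v : V, B v v = 0)
    (r : ℕ)
    (hr_le : ∀ l : ℂ, formRank (A + l • B) ≤ r)
    (hr_ex : ∃ l : ℂ, formRank (A + l • B) = r) :
    Even r ∧
      ∃ U : Submodule ℂ V,
        (∀ u ∈ U, ∀ u' ∈ U, A u u' = 0 ∧ B u u' = 0) ∧
        2 * Module.finrank ℂ U = 2 * Module.finrank ℂ V - r := by
  have hr : IsGreatest (Set.range fun l : ℂ => formRank (A + l • B)) r :=
    ⟨hr_ex, by rintro _ ⟨l, rfl⟩; exact hr_le l⟩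
  obtain ⟨U, hU, hdim⟩ := exists_isotropic_of_isGreatest_formRank hA hB hr
  exact ⟨⟨finrank ℂ V - finrank ℂ U, by omega⟩, U, hU, by omega⟩
end

section
/- Index of the annihilator: let g be a finite-dimensional complex Lie algebra and a ∈ g*. Then Ann a = {ξ ∈ g : a(⁅ξ,η⁆) = 0 for all η ∈ g} is a Lie subalgebra of g, and ind(Ann a) ≥ ind g. -/
attribute [local instance] LieRing.ofAssociativeRing

/-- For `x ∈ g*`, the alternating bilinear form `𝒜_x (ξ, η) = x ⁅ξ, η⁆` on `g`. -/
noncomputable def coadjForm (R : Type*) (L : Type*) [CommRing R] [LieRing L] [LieAlgebra R L]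
    (x : Module.Dual R L) : L →ₗ[R] L →ₗ[R] R :=
  (LinearMap.llcomp R L L R x).comp (LieAlgebra.ad R L).toLinearMap

/-- The index of a Lie algebra: `ind h = min_{β ∈ h*} dim {ζ ∈ h : β ⁅ζ, θ⁆ = 0 ∀ θ}`. -/
noncomputable def lieIndex (R : Type*) (L : Type*) [CommRing R] [LieRing L] [LieAlgebra R L] :
    ℕ :=
  sInf (Set.range fun x : Module.Dual R L =>
    Module.finrank R (LinearMap.ker (coadjForm R L x)))

/-!
Fix `β ∈ (Ann a)*` and extend it to `b ∈ g*`; we look at the pencil `a + t • b`. The form `𝒜_a`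
is nondegenerate on a complement `U` of `Ann a = ker 𝒜_a`, and `𝒜_b` restricts on `Ann a` to `𝒜_β`,
which is nondegenerate on a complement `W` of `ker 𝒜_β` in `Ann a`. Since `𝒜_a` vanishes against
`W`, the Gram matrix of `𝒜_{a + t b}` on `U ⊕ W` (with `W` rescaled by `t⁻¹`) depends polynomially
on `t` and at `t = 0` is block triangular with determinant `det 𝒜_a|_U · det 𝒜_β|_W ≠ 0`. Hence for
generic `t` the kernel of `𝒜_{a + t b}` has dimension at most `dim g - dim U - dim W = dim ker 𝒜_β`.
-/

open Module LinearMap Matrix Polynomial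

theorem Matrix.exists_det_fromBlocks_add_smul_ne_zero {K m n : Type*} [Field K] [Infinite K]
    [Fintype m] [Fintype n] [DecidableEq m] [DecidableEq n]
    (A₁₁ B₁₁ : Matrix m m K) (B₁₂ : Matrix m n K) (B₂₁ : Matrix n m K) (B₂₂ : Matrix n n K)
    (hA : A₁₁.det ≠ 0) (hB : B₂₂.det ≠ 0) :
    ∃ t : K, t ≠ 0 ∧ (fromBlocks (A₁₁ + t • B₁₁) B₁₂ (t • B₂₁) B₂₂).det ≠ 0 := by
  let N : Matrix (m ⊕ n) (m ⊕ n) K[X] :=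
    (fromBlocks A₁₁ B₁₂ 0 B₂₂).map C + (X : K[X]) • (fromBlocks B₁₁ 0 B₂₁ 0).map C
  have eval_N (t : K) : N.det.eval t = (fromBlocks (A₁₁ + t • B₁₁) B₁₂ (t • B₂₁) B₂₂).det := by
    rw [← coe_evalRingHom, RingHom.map_det]
    congr 1
    ext (i | i) (j | j) <;> simp [N] <;> ring
  have hN : N.det ≠ 0 := fun h => by
    simpa [h, det_fromBlocks_zero₂₁, hA, hB] using eval_N 0
  obtain ⟨t, ht⟩ : ∃ t, (X * N.det).eval t ≠ 0 := by
    by_contra! h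
    exact mul_ne_zero X_ne_zero hN (zero_of_eval_zero _ h)
  rw [eval_mul, eval_X, eval_N] at ht
  exact ⟨t, left_ne_zero_of_mul ht, right_ne_zero_of_mul ht⟩

namespace LinearMap.BilinForm

variable {K V : Type*} [Field K] [AddCommGroup V] [Module K V]

theorem IsRefl.det_toMatrix_restrict_ne_zero_of_isCompl {C : LinearMap.BilinForm K V}
    (hC : C.IsRefl) {U : Submodule K V} (hU : IsCompl (ker C) U)
    {ι : Type*} [Fintype ι] [DecidableEq ι] (e : Basis ι K U) :
    (toMatrix e (C.restrict U)).det ≠ 0 := by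
  have := Module.Finite.of_basis e
  rw [← nondegenerate_iff_det_ne_zero, nondegenerate_iff_ker_eq_bot,
    ker_restrict_eq_of_codisjoint hU.symm.codisjoint fun x _ y hy => hC y x (by simp_all),
    ← Submodule.disjoint_iff_comap_eq_bot]
  exact hU.disjoint.symm

theorem finrank_ker_add_card_le_of_det_ne_zero [FiniteDimensional K V]
    (C : LinearMap.BilinForm K V) {ι : Type*} [Fintype ι] [DecidableEq ι] (v w : ι → V)
    (hdet : (Matrix.of fun i j => C (v i) (w j)).det ≠ 0) :
    finrank K (ker C) + Fintype.card ι ≤ finrank K V := by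
  let D : V →ₗ[K] ι → K := (LinearMap.pi fun j => LinearMap.applyₗ (w j)) ∘ₗ C
  have hsurj : Function.Surjective D := by
    intro y
    obtain ⟨c, rfl⟩ := (vecMul_surjective_iff_isUnit (A := Matrix.of fun i j => C (v i) (w j))).mpr
      ((Matrix.isUnit_iff_isUnit_det _).mpr hdet.isUnit) y
    refine ⟨∑ i, c i • v i, funext fun j => ?_⟩
    simp [D, vecMul, dotProduct]
  have hker : finrank K (ker C) ≤ finrank K (ker D) :=
    Submodule.finrank_mono fun z hz => by simp_all [D]
  have := D.finrank_range_add_finrank_ker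
  rw [range_eq_top.mpr hsurj, finrank_top, Module.finrank_fintype_fun_eq_card] at this
  omega

theorem exists_finrank_ker_add_smul_le [Infinite K] [FiniteDimensional K V]
    (A B : LinearMap.BilinForm K V) (hA : A.IsRefl) (hB : (B.restrict (ker A)).IsRefl) :
    ∃ t : K, finrank K (ker (A + t • B)) ≤ finrank K (ker (B.restrict (ker A))) := by
  obtain ⟨U, hU⟩ := (ker A).exists_isCompl
  obtain ⟨W, hW⟩ := (ker (B.restrict (ker A))).exists_isCompl
  let eU := Module.finBasis K U
  let eW := Module.finBasis K W
  let u i : V := eU i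
  let w j : V := (eW j : ker A)
  have hAw j : A (w j) = 0 := (eW j : ker A).2
  have hAuw i j : A (u i) (w j) = 0 := hA _ _ (by simp [hAw])
  obtain ⟨t, ht, hdet⟩ := exists_det_fromBlocks_add_smul_ne_zero
    (toMatrix eU (A.restrict U)) (.of fun i j => B (u i) (u j)) (.of fun i j => B (u i) (w j))
    (.of fun i j => B (w i) (u j)) (toMatrix eW ((B.restrict (ker A)).restrict W))
    (hA.det_toMatrix_restrict_ne_zero_of_isCompl hU eU)
    (hB.det_toMatrix_restrict_ne_zero_of_isCompl hW eW)
  -- rescaling `w` by `t⁻¹` turns the Gram matrix of `A + t • B` into the block matrix above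
  have hgram : (Matrix.of fun i j => (A + t • B) (Sum.elim u w i) (Sum.elim u (t⁻¹ • w) j)) =
      fromBlocks (toMatrix eU (A.restrict U) + t • .of fun i j => B (u i) (u j))
        (.of fun i j => B (u i) (w j)) (t • .of fun i j => B (w i) (u j))
        (toMatrix eW ((B.restrict (ker A)).restrict W)) := by
    ext (i | i) (j | j) <;> simp [hAw, hAuw, ht, u, w]
  have hrank := finrank_ker_add_card_le_of_det_ne_zero _ _ _ (hgram ▸ hdet)
  have hUdim := Submodule.finrank_add_eq_of_isCompl hU
  have hWdim := Submodule.finrank_add_eq_of_isCompl hW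
  simp only [Fintype.card_sum, Fintype.card_fin] at hrank
  exact ⟨t, by omega⟩

end LinearMap.BilinForm

section CoadjForm

variable {R L : Type*} [CommRing R] [LieRing L] [LieAlgebra R L]

@[simp]
theorem coadjForm_apply (x : Dual R L) (ξ η : L) : coadjForm R L x ξ η = x ⁅ξ, η⁆ := rfl

@[simp]
theorem coadjForm_add (x y : Dual R L) :
    coadjForm R L (x + y) = coadjForm R L x + coadjForm R L y := by
  ext; simp

@[simp]
theorem coadjForm_smul (t : R) (x : Dual R L) : coadjForm R L (t • x) = t • coadjForm R L x := by
  ext; simp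

theorem coadjForm_isAlt (x : Dual R L) : (coadjForm R L x).IsAlt := fun ξ => by simp

variable (R L) in
noncomputable def coadjAnnihilator (a : Dual R L) : LieSubalgebra R L where
  toSubmodule := ker (coadjForm R L a)
  lie_mem' {ξ ξ'} hξ hξ' := by
    ext η
    have h₁ : a ⁅ξ, ⁅ξ', η⁆⁆ = 0 := by simpa using LinearMap.congr_fun hξ ⁅ξ', η⁆
    have h₂ : a ⁅ξ', ⁅ξ, η⁆⁆ = 0 := by simpa using LinearMap.congr_fun hξ' ⁅ξ, η⁆
    simp [lie_lie, h₁, h₂]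

@[simp]
theorem mem_coadjAnnihilator (a : Dual R L) (ξ : L) :
    ξ ∈ coadjAnnihilator R L a ↔ ∀ η, a ⁅ξ, η⁆ = 0 := by
  simp [coadjAnnihilator, ← LieSubalgebra.mem_toSubmodule, LinearMap.ext_iff]

end CoadjForm

/-- For a finite-dimensional complex Lie algebra `g` and `a ∈ g*`, the annihilator
`Ann a = {ξ ∈ g : a ⁅ξ, η⁆ = 0 for all η ∈ g}` is a Lie subalgebra of `g`, and its index
satisfies `ind (Ann a) ≥ ind g`. -/
theorem lieIndex_annihilator_ge
    (g : Type*) [LieRing g] [LieAlgebra ℂ g] [FiniteDimensional ℂ g]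
    (a : Module.Dual ℂ g) :
    ∃ h : LieSubalgebra ℂ g,
      (h : Set g) = {ξ : g | ∀ η : g, a ⁅ξ, η⁆ = 0} ∧
      lieIndex ℂ g ≤ lieIndex ℂ h := by
  let h := coadjAnnihilator ℂ g a
  refine ⟨h, by ext; simp [h], le_csInf ⟨_, 0, rfl⟩ ?_⟩
  rintro _ ⟨β, rfl⟩
  let b := Subspace.dualLift h.toSubmodule β
  obtain ⟨t, ht⟩ := BilinForm.exists_finrank_ker_add_smul_le (coadjForm ℂ g a) (coadjForm ℂ g b)
    (coadjForm_isAlt a).isRefl (IsAlt.isRefl fun ξ => coadjForm_isAlt b ξ)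
  have hb : b ∘ₗ h.toSubmodule.subtype = β := ext Subspace.dualLift_of_subtype
  calc lieIndex ℂ g ≤ finrank ℂ (ker (coadjForm ℂ g (a + t • b))) := Nat.sInf_le ⟨_, rfl⟩
    _ ≤ finrank ℂ (ker (BilinForm.restrict (coadjForm ℂ g b) h.toSubmodule)) := by
      rwa [coadjForm_add, coadjForm_smul]
    _ = finrank ℂ (ker (coadjForm ℂ h β)) := by rw [← hb]; rfl
end

section
/- Singular set of gl(n) ⋉ Mat_n: let g be the Lie algebra Mat_n(ℂ) × Mat_n(ℂ) with bracket ⁅(X₁,Y₁),(X₂,Y₂)⁆ = (X₁X₂ − X₂X₁, X₁Y₂ − X₂Y₁) (the semidirect sum of gl(n,ℂ) with the space of n×n matrices under left multiplication). For A, C ∈ Mat_n(ℂ), let 𝒜_{(A,C)} be the alternating bilinear form on g given by 𝒜_{(A,C)}((X₁,Y₁),(X₂,Y₂)) = Tr(A(X₁X₂ − X₂X₁)) + Tr(C(X₁Y₂ − X₂Y₁)). Then 𝒜_{(A,C)} is nondegenerate if and only if det C ≠ 0. In particular, g is a Frobenius Lie algebra. -/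
open Matrix

/-- The alternating bilinear form `𝒜_{(A,C)}` on the Lie algebra
`g = Mat_n(ℂ) × Mat_n(ℂ)` (the semidirect sum of `gl(n, ℂ)` with the space of `n × n`
matrices under left multiplication, with bracket
`⁅(X₁,Y₁),(X₂,Y₂)⁆ = (X₁X₂ − X₂X₁, X₁Y₂ − X₂Y₁)`), given by
`𝒜_{(A,C)}((X₁,Y₁),(X₂,Y₂)) = Tr(A(X₁X₂ − X₂X₁)) + Tr(C(X₁Y₂ − X₂Y₁))`. -/
noncomputable def glMatForm (n : ℕ) (A C : Matrix (Fin n) (Fin n) ℂ)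
    (p q : Matrix (Fin n) (Fin n) ℂ × Matrix (Fin n) (Fin n) ℂ) : ℂ :=
  (A * (p.1 * q.1 - q.1 * p.1)).trace + (C * (p.1 * q.2 - q.1 * p.2)).trace

/-!
If `(X, Y)` lies in the radical of `𝒜_{(A,C)}`, pairing it with `(0, Y')` gives `Tr(C X Y') = 0`
for all `Y'`, so `C X = 0`. Pairing `(0, Y)` with `(X', Y')` gives `-Tr(Y C X')`, so `(0, Y)` is
in the radical exactly when `Y C = 0`. Hence the radical is trivial iff `C` has no nonzero left
annihilator, i.e. iff `det C ≠ 0`.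
-/

theorem Matrix.exists_ne_zero_mul_eq_zero_of_det_eq_zero {n K : Type*} [Fintype n]
    [DecidableEq n] [Field K] {C : Matrix n n K} (h : C.det = 0) :
    ∃ Y : Matrix n n K, Y ≠ 0 ∧ Y * C = 0 := by
  obtain ⟨v, hv, hvC⟩ := exists_vecMul_eq_zero_iff.2 h
  obtain ⟨i, -⟩ := Function.ne_iff.1 hv
  have : Nonempty n := ⟨i⟩
  refine ⟨replicateRow n v, by simpa using hv, ?_⟩
  rw [← replicateRow_vecMul, hvC, replicateRow_zero]

section glMatForm

variable {n : ℕ} {A C : Matrix (Fin n) (Fin n) ℂ}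

theorem glMatForm_zero_fst_right (p : Matrix (Fin n) (Fin n) ℂ × Matrix (Fin n) (Fin n) ℂ)
    (Y : Matrix (Fin n) (Fin n) ℂ) : glMatForm n A C p (0, Y) = (C * p.1 * Y).trace := by
  simp [glMatForm, Matrix.mul_assoc]

theorem glMatForm_zero_fst_left (Y : Matrix (Fin n) (Fin n) ℂ)
    (q : Matrix (Fin n) (Fin n) ℂ × Matrix (Fin n) (Fin n) ℂ) :
    glMatForm n A C (0, Y) q = -(Y * C * q.1).trace := by
  simp only [glMatForm, Matrix.zero_mul, Matrix.mul_zero, sub_zero, zero_sub, Matrix.mul_neg,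
    trace_neg, trace_zero, zero_add]
  rw [← Matrix.mul_assoc, trace_mul_cycle]

theorem mul_fst_eq_zero_of_forall_glMatForm_eq_zero
    {p : Matrix (Fin n) (Fin n) ℂ × Matrix (Fin n) (Fin n) ℂ}
    (hp : ∀ q, glMatForm n A C p q = 0) : C * p.1 = 0 :=
  ext_iff_trace_mul_right.2 fun Y => by
    rw [← glMatForm_zero_fst_right, hp, Matrix.zero_mul, trace_zero]

theorem forall_glMatForm_zero_fst_left_eq_zero_iff (Y : Matrix (Fin n) (Fin n) ℂ) :
    (∀ q, glMatForm n A C (0, Y) q = 0) ↔ Y * C = 0 := by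
  simp only [glMatForm_zero_fst_left, neg_eq_zero]
  constructor
  · intro h
    exact ext_iff_trace_mul_right.2 fun X => by simpa using h (X, 0)
  · intro h q
    rw [h, Matrix.zero_mul, trace_zero]

theorem glMatForm_separatingLeft_iff :
    (∀ p, (∀ q, glMatForm n A C p q = 0) → p = 0) ↔ C.det ≠ 0 := by
  constructor
  · intro hsep hdet
    obtain ⟨Y, hY, hYC⟩ := exists_ne_zero_mul_eq_zero_of_det_eq_zero hdet
    have hrad := (forall_glMatForm_zero_fst_left_eq_zero_iff (A := A) Y).2 hYC
    exact hY (congrArg Prod.snd (hsep (0, Y) hrad))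
  · intro hdet p hp
    have hC : IsUnit C := (isUnit_iff_isUnit_det C).2 (isUnit_iff_ne_zero.2 hdet)
    obtain ⟨X, Y⟩ := p
    obtain rfl : X = 0 :=
      hC.mul_right_eq_zero.1 (mul_fst_eq_zero_of_forall_glMatForm_eq_zero hp)
    obtain rfl : Y = 0 :=
      hC.mul_left_eq_zero.1 ((forall_glMatForm_zero_fst_left_eq_zero_iff Y).1 hp)
    rfl

end glMatForm

/-- **Singular set of `gl(n) ⋉ Mat_n`.** The form `𝒜_{(A,C)}` is nondegenerate if and only
if `det C ≠ 0`. In particular (second conjunct) such a pair `(A, C)` exists, i.e. the Lie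
algebra `gl(n) ⋉ Mat_n` is Frobenius. -/
theorem glMatForm_nondegenerate_iff (n : ℕ) :
    (∀ A C : Matrix (Fin n) (Fin n) ℂ,
      (∀ p : Matrix (Fin n) (Fin n) ℂ × Matrix (Fin n) (Fin n) ℂ,
          (∀ q : Matrix (Fin n) (Fin n) ℂ × Matrix (Fin n) (Fin n) ℂ,
            glMatForm n A C p q = 0) → p = 0) ↔
        C.det ≠ 0) ∧
    (∃ A C : Matrix (Fin n) (Fin n) ℂ,
      ∀ p : Matrix (Fin n) (Fin n) ℂ × Matrix (Fin n) (Fin n) ℂ,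
        (∀ q : Matrix (Fin n) (Fin n) ℂ × Matrix (Fin n) (Fin n) ℂ,
          glMatForm n A C p q = 0) → p = 0) :=
  ⟨fun _ _ => glMatForm_separatingLeft_iff,
    0, 1, glMatForm_separatingLeft_iff.2 (by simp)⟩
end
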